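/- Let G be a connected non-bipartite graph and n ≥ 6 an even integer. If κ(G × K_2) > (4/n)·δ(G), then G × C_n is super connected. -/

import Mathlib

open SimpleGraph

universe u v

variable {α : Type u} {β : Type v}

/-- Direct (tensor) product of two simple graphs. -/
def SimpleGraph.tensorProd (G : SimpleGraph α) (H : SimpleGraph β) :
    SimpleGraph (α × β) where
  Adj x y := G.Adj x.1 y.1 ∧ H.Adj x.2 y.2
  symm := ⟨fun x y h => ⟨h.1.symm, h.2.symm⟩⟩
  loopless := ⟨fun x h => G.loopless.irrefl x.1 h.1⟩

/-- Direct (tensor) product of a family of simple graphs. -/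
def SimpleGraph.piTensorProd {ι : Type*} {V : ι → Type*}
    (G : ∀ i, SimpleGraph (V i)) : SimpleGraph (∀ i, V i) where
  Adj f g := f ≠ g ∧ ∀ i, (G i).Adj (f i) (g i)
  symm := ⟨fun f g h => ⟨h.1.symm, fun i => (h.2 i).symm⟩⟩
  loopless := ⟨fun f h => h.1 rfl⟩

/-- `S` is a vertex cut of `G`: deleting `S` leaves a disconnected graph. -/
def SimpleGraph.IsVertexCut (G : SimpleGraph α) (S : Set α) : Prop :=
  ¬ (G.induce Sᶜ).Connected

/-- Vertex connectivity: minimum size of a set `S` such that `G - S` is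
disconnected or has at most one vertex. -/
noncomputable def SimpleGraph.vConn (G : SimpleGraph α) : ℕ :=
  sInf {n | ∃ S : Set α, S.ncard = n ∧
    (G.IsVertexCut S ∨ Nat.card α ≤ n + 1)}

/-- Minimum degree (via neighbor set cardinalities). -/
noncomputable def SimpleGraph.minDeg (G : SimpleGraph α) : ℕ :=
  sInf {d | ∃ v, (G.neighborSet v).ncard = d}

/-- A minimum vertex cut. -/
def SimpleGraph.IsMinVertexCut (G : SimpleGraph α) (S : Set α) : Prop :=
  G.IsVertexCut S ∧ S.ncard = G.vConn

/-- `G` is super connected: every minimum vertex cut is the neighborhood of a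
vertex of minimum degree. -/
def SimpleGraph.SuperConnected (G : SimpleGraph α) : Prop :=
  ∀ S : Set α, G.IsMinVertexCut S →
    ∃ v, (G.neighborSet v).ncard = G.minDeg ∧ S = G.neighborSet v

/-- `(X, Y)` is a bipartition of `G`. -/
def SimpleGraph.IsBipartition (G : SimpleGraph α) (X Y : Set α) : Prop :=
  Disjoint X Y ∧ X ∪ Y = Set.univ ∧
    ∀ u v, G.Adj u v → (u ∈ X ∧ v ∈ Y) ∨ (u ∈ Y ∧ v ∈ X)

/-- The graph `G̃ₙ`: vertex set `α × ZMod n`, with for each `i` a copy `Hᵢ`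
of `G` on `(Xᵢ, Yᵢ)` and a copy `Hᵢ'` of `G` on `(Xᵢ₊₁, Yᵢ)`. -/
def tildeG (G : SimpleGraph α) (X Y : Set α) (n : ℕ) :
    SimpleGraph (α × ZMod n) where
  Adj a b := G.Adj a.1 b.1 ∧
    ((a.1 ∈ X ∧ b.1 ∈ Y ∧ (a.2 = b.2 ∨ a.2 = b.2 + 1)) ∨
     (a.1 ∈ Y ∧ b.1 ∈ X ∧ (b.2 = a.2 ∨ b.2 = a.2 + 1)))
  symm := ⟨fun a b h => ⟨h.1.symm, by tauto⟩⟩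
  loopless := ⟨fun a h => G.loopless.irrefl a.1 h.1⟩

/-!
Let `S` be a minimum vertex cut of `G × Cₙ`, so `|S| ≤ 2δ(G)`. For each edge `i (i+1)` of `Cₙ`
the layers `i` and `i + 1` span a copy of `G × K₂`; if two components of `G × Cₙ - S` both meet
it, `S` has at least `κ(G × K₂)` vertices there. Summing over the `n` edges counts `S` twice, so
`n κ(G × K₂) > 4δ` forces some component `K` to miss two consecutive layers.

Going up the cycle from the missed layers, let `a` and `b` be the first and the last layer met by
`K`. The layers `a - 1` and `b + 1` contain the `G`-neighbourhoods of vertices of `K`, so at least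
`δ` vertices of `S` each. If `K` also meets layer `a + 1`, these `2δ` vertices are all of `S`, so
the layers `a, a + 1` avoid `S`; since `κ(G × K₂) > 0` the copy of `G × K₂` they span is connected,
so `K` fills it and then reaches layer `a - 1`, a contradiction. Hence a vertex of `K` in layer `a`
has its whole neighbourhood in `S`, and by counting that neighbourhood is `S`.
-/

theorem Fin.val_add_one_sub {n : ℕ} {i j : Fin (n + 1)} (hj : (j - i).val < n) :
    (j + 1 - i).val = (j - i).val + 1 := by
  rw [show j + 1 - i = j - i + 1 by abel]
  exact Fin.val_add_one_of_lt (Fin.lt_def.2 hj)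

theorem Fin.val_sub_one_sub {n : ℕ} {i j : Fin (n + 1)} (hj : 0 < (j - i).val) :
    (j - 1 - i).val = (j - i).val - 1 := by
  rw [show j - 1 - i = j - i - 1 by abel, Fin.coe_sub_one, if_neg (fun h => by simp [h] at hj)]

theorem Fin.exists_arc_ends {m : ℕ} {L : Set (Fin (m + 3))} (hL : L.Nonempty) {i : Fin (m + 3)}
    (hi : i ∉ L) (hi' : i + 1 ∉ L) :
    ∃ a ∈ L, ∃ b ∈ L, a - 1 ∉ L ∧ b + 1 ∉ L ∧
      (a + 1 ∈ L → a - 1 ≠ b + 1 ∧ a ≠ b + 1 ∧ a + 1 ≠ b + 1) := by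
  -- `h j` is the distance from `i + 1` up to `j`; `a` and `b` minimise and maximise it on `L`
  set h : Fin (m + 3) → ℕ := fun j => (j - (i + 1)).val
  have h_ne {j j'} (hjj' : h j ≠ h j') : j ≠ j' := fun e => hjj' (e ▸ rfl)
  have h_i : h i = m + 2 := by
    show (i - (i + 1)).val = m + 2
    rw [sub_add_eq_sub_sub, sub_self, zero_sub, Fin.coe_neg_one]
  have h_L {j} (hj : j ∈ L) : 0 < h j ∧ h j < m + 2 := by
    refine ⟨Fin.pos_of_ne_zero (sub_ne_zero.2 fun e => hi' (e ▸ hj)), ?_⟩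
    have : h j ≠ h i := fun e => hi (sub_left_injective (Fin.ext e) ▸ hj)
    have : h j < m + 3 := Fin.is_lt _
    omega
  obtain ⟨a, ha, ha_min⟩ := Set.exists_min_image L h L.toFinite hL
  obtain ⟨b, hb, hb_max⟩ := Set.exists_max_image L h L.toFinite hL
  have ha_pred : h (a - 1) = h a - 1 := Fin.val_sub_one_sub (h_L ha).1
  have ha_succ : h (a + 1) = h a + 1 := Fin.val_add_one_sub (h_L ha).2
  have hb_succ : h (b + 1) = h b + 1 := Fin.val_add_one_sub (h_L hb).2
  have := (h_L ha).1
  refine ⟨a, ha, b, hb, fun h' => ?_, fun h' => ?_, fun h' => ?_⟩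
  · have := ha_min _ h'
    omega
  · have := hb_max _ h'
    omega
  · have := hb_max _ h'
    exact ⟨h_ne (by omega), h_ne (by omega), h_ne (by omega)⟩

theorem Fin.add_one_ne_sub_one {m : ℕ} (a : Fin (m + 3)) : a + 1 ≠ a - 1 := by
  rw [Ne, ← sub_eq_zero, add_sub_sub_cancel, Fin.ext_iff]
  simp [Fin.val_add, Nat.mod_eq_of_lt (show 2 < m + 3 by omega)]

namespace SimpleGraph

section VertexCut

variable {V V' : Type*} {G : SimpleGraph V} {S : Set V}

theorem vConn_le_ncard (hS : G.IsVertexCut S) : G.vConn ≤ S.ncard :=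
  Nat.sInf_le ⟨S, rfl, Or.inl hS⟩

theorem one_lt_card_of_vConn_pos (h : 0 < G.vConn) : 1 < Nat.card V := by
  by_contra! hV
  have : G.vConn ≤ 0 := Nat.sInf_le ⟨∅, Set.ncard_empty V, Or.inr hV⟩
  omega

theorem minDeg_le_ncard_neighborSet (v : V) : G.minDeg ≤ (G.neighborSet v).ncard :=
  Nat.sInf_le ⟨v, rfl⟩

theorem exists_ncard_neighborSet_eq_minDeg [Nonempty V] :
    ∃ v, (G.neighborSet v).ncard = G.minDeg :=
  Nat.sInf_mem (s := {d | ∃ v, (G.neighborSet v).ncard = d}) ⟨_, Classical.arbitrary V, rfl⟩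

theorem minDeg_lt_card [Finite V] [Nonempty V] : G.minDeg < Nat.card V := by
  obtain ⟨v⟩ := ‹Nonempty V›
  refine (minDeg_le_ncard_neighborSet v).trans_lt (Set.ncard_lt_card fun h => ?_)
  exact G.irrefl (show v ∈ G.neighborSet v from h ▸ Set.mem_univ v)

theorem isVertexCut_neighborSet {v w : V} (hvw : v ≠ w) (hadj : ¬ G.Adj v w) :
    G.IsVertexCut (G.neighborSet v) := by
  intro hconn
  have hv : v ∉ G.neighborSet v := G.irrefl
  obtain ⟨p⟩ := hconn.preconnected ⟨v, hv⟩ ⟨w, hadj⟩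
  cases p with
  | nil => exact hvw rfl
  | @cons _ x _ h _ => exact x.2 h

theorem vConn_le_minDeg [Nonempty V] (h : ∀ v, ∃ w, v ≠ w ∧ ¬ G.Adj v w) :
    G.vConn ≤ G.minDeg := by
  obtain ⟨v, hv⟩ := G.exists_ncard_neighborSet_eq_minDeg
  obtain ⟨w, hvw, hadj⟩ := h v
  exact hv ▸ vConn_le_ncard (isVertexCut_neighborSet hvw hadj)

theorem IsMinVertexCut.eq_neighborSet [Finite V] (hS : G.IsMinVertexCut S)
    (hκ : G.vConn ≤ G.minDeg) {v : V} (hsub : G.neighborSet v ⊆ S) :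
    (G.neighborSet v).ncard = G.minDeg ∧ S = G.neighborSet v := by
  have hle : S.ncard ≤ (G.neighborSet v).ncard :=
    hS.2 ▸ hκ.trans (minDeg_le_ncard_neighborSet v)
  refine ⟨le_antisymm ?_ (minDeg_le_ncard_neighborSet v), ?_⟩
  · exact (Set.ncard_le_ncard hsub S.toFinite).trans (hS.2 ▸ hκ)
  · exact (Set.eq_of_subset_of_ncard_le hsub hle S.toFinite).symm

theorem IsMinVertexCut.exists_not_reachable [Finite V] [Nonempty V] (hS : G.IsMinVertexCut S)
    (hκ : G.vConn ≤ G.minDeg) : ∃ x y : ↥Sᶜ, ¬ (G.induce Sᶜ).Reachable x y := by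
  have hcard : S.ncard < Nat.card V := hS.2 ▸ hκ.trans_lt G.minDeg_lt_card
  have : Nonempty ↥Sᶜ := (Set.nonempty_compl.2 fun h => by simp [h] at hcard).to_subtype
  by_contra! h
  exact hS.1 ⟨h⟩

theorem vConn_le_ncard_inter_range {G' : SimpleGraph V'} (f : G' →g G)
    (hf : Function.Injective f) {c d : V'} (hc : f c ∉ S) (hd : f d ∉ S)
    (hcd : ¬ (G.induce Sᶜ).Reachable ⟨f c, hc⟩ ⟨f d, hd⟩) :
    G'.vConn ≤ (S ∩ Set.range f).ncard := by
  rw [← Set.image_preimage_eq_inter_range, Set.ncard_image_of_injective _ hf]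
  refine vConn_le_ncard fun hconn => hcd ?_
  let F : G'.induce (f ⁻¹' S)ᶜ →g G.induce Sᶜ :=
    ⟨fun p => ⟨f p, p.2⟩, fun h => f.map_adj h⟩
  exact (hconn.preconnected ⟨c, hc⟩ ⟨d, hd⟩).map F

end VertexCut

theorem cycleGraph_adj_add_one {m : ℕ} (j : Fin (m + 2)) : (cycleGraph (m + 2)).Adj j (j + 1) :=
  cycleGraph_adj.2 (Or.inr (by simp))

theorem cycleGraph_adj_sub_one {m : ℕ} (j : Fin (m + 2)) : (cycleGraph (m + 2)).Adj j (j - 1) :=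
  cycleGraph_adj.2 (Or.inl (by simp))

theorem ncard_neighborSet_cycleGraph {m : ℕ} (j : Fin (m + 3)) :
    ((cycleGraph (m + 3)).neighborSet j).ncard = 2 := by
  rw [← Nat.card_coe_set_eq, Nat.card_eq_fintype_card, card_neighborSet_eq_degree,
    cycleGraph_degree_three_le]

section TensorProd

variable {G : SimpleGraph α} {H : SimpleGraph β} {S : Set (α × β)}

theorem neighborSet_tensorProd (p : α × β) :
    (G.tensorProd H).neighborSet p = G.neighborSet p.1 ×ˢ H.neighborSet p.2 :=
  rfl

variable (G) in
/-- The copy of `G × K₂` spanned by the layers `i` and `j` of `G × H`. -/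
def doubleCoverHom {i j : β} (hij : H.Adj i j) :
    G.tensorProd (⊤ : SimpleGraph (Fin 2)) →g G.tensorProd H where
  toFun p := (p.1, ![i, j] p.2)
  map_rel' := by
    rintro ⟨a, e⟩ ⟨b, e'⟩ ⟨hab, hee⟩
    refine ⟨hab, ?_⟩
    fin_cases e <;> fin_cases e' <;> simp_all [hij.symm]

theorem doubleCoverHom_injective {i j : β} (hij : H.Adj i j) :
    Function.Injective (G.doubleCoverHom hij) := by
  rintro ⟨a, e⟩ ⟨b, e'⟩ h
  simp only [doubleCoverHom, RelHom.coeFn_mk, Prod.mk.injEq] at h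
  fin_cases e <;> fin_cases e' <;> simp_all [hij.ne, hij.ne.symm]

theorem range_doubleCoverHom {i j : β} (hij : H.Adj i j) :
    Set.range (G.doubleCoverHom hij) = Prod.snd ⁻¹' {i, j} := by
  ext ⟨a, k⟩
  simp only [doubleCoverHom, RelHom.coeFn_mk, Set.mem_range, Prod.exists, Prod.mk.injEq,
    Set.mem_preimage, Set.mem_insert_iff, Set.mem_singleton_iff]
  constructor
  · rintro ⟨b, e, rfl, rfl⟩
    fin_cases e <;> simp
  · rintro (rfl | rfl)
    exacts [⟨a, 0, rfl, rfl⟩, ⟨a, 1, rfl, rfl⟩]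

theorem vConn_doubleCover_le_ncard_inter {i j : β} (hij : H.Adj i j) {c d : ↥Sᶜ}
    (hc : c.1 ∈ Prod.snd ⁻¹' {i, j}) (hd : d.1 ∈ Prod.snd ⁻¹' {i, j})
    (hcd : ¬ ((G.tensorProd H).induce Sᶜ).Reachable c d) :
    (G.tensorProd (⊤ : SimpleGraph (Fin 2))).vConn ≤ (S ∩ Prod.snd ⁻¹' {i, j}).ncard := by
  rw [← range_doubleCoverHom (G := G) hij] at hc hd ⊢
  obtain ⟨c', hc'⟩ := hc
  obtain ⟨d', hd'⟩ := hd
  refine vConn_le_ncard_inter_range _ (doubleCoverHom_injective hij) (hc' ▸ c.2) (hd' ▸ d.2) ?_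
  rwa [show (⟨_, hc' ▸ c.2⟩ : ↥Sᶜ) = c from Subtype.ext hc',
    show (⟨_, hd' ▸ d.2⟩ : ↥Sᶜ) = d from Subtype.ext hd']

theorem sum_ncard_inter_preimage_pair [Finite α] [AddGroup β] [Fintype β] (S : Set (α × β))
    {g : β} (hg : g ≠ 0) :
    ∑ i, (S ∩ Prod.snd ⁻¹' {i, i + g}).ncard = 2 * S.ncard := by
  have hlayer (i : β) : (S ∩ Prod.snd ⁻¹' {i, i + g}).ncard =
      (S ∩ Prod.snd ⁻¹' {i}).ncard + (S ∩ Prod.snd ⁻¹' {i + g}).ncard := by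
    rw [Set.insert_eq, Set.preimage_union, Set.inter_union_distrib_left]
    refine Set.ncard_union_eq ?_ (Set.toFinite _) (Set.toFinite _)
    refine Disjoint.mono Set.inter_subset_right Set.inter_subset_right ?_
    exact Disjoint.preimage _ (by simpa using hg)
  have hsum : ∑ i, (S ∩ Prod.snd ⁻¹' {i}).ncard = S.ncard := by
    rw [← finsum_eq_sum_of_fintype, ← Set.ncard_iUnion_of_finite (fun _ => Set.toFinite _)]
    · rw [← Set.inter_iUnion, ← Set.preimage_iUnion, Set.iUnion_singleton_eq_range,
        Set.range_id', Set.preimage_univ, Set.inter_univ]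
    · intro i j hij
      exact Disjoint.mono Set.inter_subset_right Set.inter_subset_right
        (Disjoint.preimage _ (Set.disjoint_singleton.2 hij))
  have hshift : ∑ i, (S ∩ Prod.snd ⁻¹' {i + g}).ncard = S.ncard :=
    (Equiv.sum_comp (Equiv.addRight g) fun i => (S ∩ Prod.snd ⁻¹' {i}).ncard).trans hsum
  rw [Finset.sum_congr rfl fun i _ => hlayer i, Finset.sum_add_distrib, hsum, hshift, two_mul]

variable {K : ((G.tensorProd H).induce Sᶜ).ConnectedComponent}

theorem prod_singleton_subset_of_mem_supp {q : ↥Sᶜ} (hq : q ∈ K.supp) {j : β}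
    (hj : H.Adj q.1.2 j) (hK : ∀ q' ∈ K.supp, q'.1.2 ≠ j) :
    G.neighborSet q.1.1 ×ˢ {j} ⊆ S := by
  rintro ⟨y, j'⟩ ⟨hy, rfl : j' = j⟩
  by_contra hyS
  exact hK ⟨_, hyS⟩ (K.mem_supp_of_adj_mem_supp hq ⟨hy, hj⟩) rfl

theorem exists_mem_supp_of_inter_eq_empty
    (hB : 0 < (G.tensorProd (⊤ : SimpleGraph (Fin 2))).vConn) {q : ↥Sᶜ} (hq : q ∈ K.supp)
    {z : α} (hz : G.Adj q.1.1 z) {j j' : β} (hj : H.Adj q.1.2 j) (hj' : H.Adj q.1.2 j')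
    (hband : S ∩ Prod.snd ⁻¹' {q.1.2, j} = ∅) (hS : (q.1.1, j') ∉ S) :
    ∃ q' ∈ K.supp, q'.1.2 = j' := by
  have hzS : (z, q.1.2) ∉ S := fun h => hband.subset ⟨h, Or.inl rfl⟩
  have hreach : ((G.tensorProd H).induce Sᶜ).Reachable q ⟨_, hzS⟩ := by
    by_contra hnr
    have := vConn_doubleCover_le_ncard_inter (c := q) (d := ⟨_, hzS⟩) hj (Or.inl rfl)
      (Or.inl rfl) hnr
    rw [hband, Set.ncard_empty] at this
    omega
  have hzK : ⟨_, hzS⟩ ∈ K.supp := (ConnectedComponent.sound hreach).symm.trans hq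
  exact ⟨⟨_, hS⟩, K.mem_supp_of_adj_mem_supp hzK ⟨hz.symm, hj'⟩, rfl⟩

theorem false_of_boundary_layers [Finite α] [Finite β]
    (hB : 0 < (G.tensorProd (⊤ : SimpleGraph (Fin 2))).vConn) (hS : S.ncard ≤ 2 * G.minDeg)
    {qa qb : ↥Sᶜ} (hqa : qa ∈ K.supp) (hqb : qb ∈ K.supp) {ja jb ja' : β}
    (hja : H.Adj qa.1.2 ja) (hjb : H.Adj qb.1.2 jb) (hja' : H.Adj qa.1.2 ja')
    (hKa : ∀ q ∈ K.supp, q.1.2 ≠ ja) (hKb : ∀ q ∈ K.supp, q.1.2 ≠ jb)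
    (hjab : ja ≠ jb) (hab : qa.1.2 ≠ jb) (hja'a : ja' ≠ ja) (hja'b : ja' ≠ jb)
    {z : α} (hz : G.Adj qa.1.1 z) : False := by
  set A := G.neighborSet qa.1.1 ×ˢ {ja}
  set B := G.neighborSet qb.1.1 ×ˢ {jb}
  have hSAB : S = A ∪ B := by
    refine (Set.eq_of_subset_of_ncard_le (Set.union_subset
      (prod_singleton_subset_of_mem_supp hqa hja hKa)
      (prod_singleton_subset_of_mem_supp hqb hjb hKb)) ?_ (Set.toFinite _)).symm
    rw [Set.ncard_union_eq (Set.disjoint_prod.2 (Or.inr (Set.disjoint_singleton.2 hjab)))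
      (Set.toFinite _) (Set.toFinite _), Set.ncard_prod, Set.ncard_prod, Set.ncard_singleton,
      Set.ncard_singleton]
    have := minDeg_le_ncard_neighborSet (G := G) qa.1.1
    have := minDeg_le_ncard_neighborSet (G := G) qb.1.1
    omega
  have hband : S ∩ Prod.snd ⁻¹' {qa.1.2, ja'} = ∅ := by
    refine Set.eq_empty_iff_forall_notMem.2 fun ⟨y, l⟩ ⟨hyS, hl⟩ => ?_
    obtain ⟨-, hl' : l = ja⟩ | ⟨-, hl' : l = jb⟩ := (Set.ext_iff.1 hSAB _).1 hyS <;>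
      obtain rfl | rfl := hl
    exacts [hja.ne hl', hja'a hl', hab hl', hja'b hl']
  have hu : (qa.1.1, ja) ∉ S := by
    intro hu
    obtain ⟨hu, -⟩ | ⟨-, hl⟩ := (Set.ext_iff.1 hSAB _).1 hu
    exacts [G.irrefl hu, hjab hl]
  obtain ⟨q', hq', hq'ja⟩ := exists_mem_supp_of_inter_eq_empty hB hqa hz hja' hja hband hu
  exact hKa q' hq' hq'ja

end TensorProd

section Cycle

variable {G : SimpleGraph α} {m : ℕ}

theorem ncard_neighborSet_tensorProd_cycleGraph (p : α × Fin (m + 3)) :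
    ((G.tensorProd (cycleGraph (m + 3))).neighborSet p).ncard =
      2 * (G.neighborSet p.1).ncard := by
  rw [neighborSet_tensorProd, Set.ncard_prod, ncard_neighborSet_cycleGraph, mul_comm]

theorem vConn_tensorProd_cycleGraph_le_minDeg [Nonempty α] :
    (G.tensorProd (cycleGraph (m + 3))).vConn ≤ (G.tensorProd (cycleGraph (m + 3))).minDeg :=
  vConn_le_minDeg fun p =>
    ⟨(p.1, p.2 + 1), fun h => by simpa using congrArg Prod.snd h, fun h => G.irrefl h.1⟩

theorem minDeg_tensorProd_cycleGraph_le [Nonempty α] :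
    (G.tensorProd (cycleGraph (m + 3))).minDeg ≤ 2 * G.minDeg := by
  obtain ⟨v, hv⟩ := G.exists_ncard_neighborSet_eq_minDeg
  have := minDeg_le_ncard_neighborSet (G := G.tensorProd (cycleGraph (m + 3))) (v, 0)
  rwa [ncard_neighborSet_tensorProd_cycleGraph, hv] at this

theorem exists_neighborSet_subset_of_supp_avoids [Finite α]
    (hB : 0 < (G.tensorProd (⊤ : SimpleGraph (Fin 2))).vConn)
    {S : Set (α × Fin (m + 3))} (hS : S.ncard ≤ 2 * G.minDeg)
    (K : ((G.tensorProd (cycleGraph (m + 3))).induce Sᶜ).ConnectedComponent) (i : Fin (m + 3))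
    (hK : ∀ q ∈ K.supp, q.1 ∉ Prod.snd ⁻¹' {i, i + 1}) :
    ∃ p, (G.tensorProd (cycleGraph (m + 3))).neighborSet p ⊆ S := by
  set L := (fun q : ↥Sᶜ => q.1.2) '' K.supp
  have hL {q} (hq : q ∈ K.supp) : q.1.2 ∈ L := ⟨q, hq, rfl⟩
  obtain ⟨_, ⟨qa, hqa, rfl⟩, _, ⟨qb, hqb, rfl⟩, ha, hb, hab⟩ :=
    Fin.exists_arc_ends (K.nonempty_supp.image _)
      (fun ⟨q, hq, e⟩ => hK q hq (Or.inl e)) (fun ⟨q, hq, e⟩ => hK q hq (Or.inr e))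
  by_cases hqaS : (G.tensorProd (cycleGraph (m + 3))).neighborSet qa ⊆ S
  · exact ⟨qa, hqaS⟩
  exfalso
  obtain ⟨⟨z, j⟩, ⟨hz, hj⟩, hzS⟩ := Set.not_subset.1 hqaS
  have hzK : ⟨(z, j), hzS⟩ ∈ K.supp := K.mem_supp_of_adj_mem_supp hqa ⟨hz, hj⟩
  have hj_eq : j = qa.1.2 + 1 := by
    have : j ∈ ({qa.1.2 - 1, qa.1.2 + 1} : Set _) := cycleGraph_neighborSet ▸ hj
    exact this.resolve_left fun e => ha (e ▸ hL hzK)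
  obtain ⟨h₁, h₂, h₃⟩ := hab (hj_eq ▸ hL hzK)
  exact false_of_boundary_layers hB hS hqa hqb (cycleGraph_adj_sub_one _)
    (cycleGraph_adj_add_one _) (cycleGraph_adj_add_one _)
    (fun q hq e => ha (e ▸ hL hq)) (fun q hq e => hb (e ▸ hL hq)) h₁ h₂
    (Fin.add_one_ne_sub_one _) h₃ hz

end Cycle

end SimpleGraph

theorem stmt_13_general (G : SimpleGraph α)
    (n : ℕ) (hn : 6 ≤ n)
    (hk : 4 * G.minDeg < n * (G.tensorProd (⊤ : SimpleGraph (Fin 2))).vConn) :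
    (G.tensorProd (cycleGraph n)).SuperConnected := by
  obtain ⟨m, rfl⟩ : ∃ m, n = m + 3 := ⟨n - 3, by omega⟩
  have hB : 0 < (G.tensorProd (⊤ : SimpleGraph (Fin 2))).vConn :=
    Nat.pos_of_ne_zero fun h => by simp [h] at hk
  have hα : 0 < Nat.card α := by
    have := one_lt_card_of_vConn_pos hB
    rw [Nat.card_prod, Nat.card_eq_fintype_card (α := Fin 2), Fintype.card_fin] at this
    omega
  obtain ⟨_, _⟩ := Nat.card_pos_iff.1 hα
  intro S hS
  have hκ := vConn_tensorProd_cycleGraph_le_minDeg (G := G) (m := m)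
  have hS2 : S.ncard ≤ 2 * G.minDeg := hS.2 ▸ hκ.trans minDeg_tensorProd_cycleGraph_le
  suffices ∃ p, (G.tensorProd (cycleGraph (m + 3))).neighborSet p ⊆ S by
    obtain ⟨p, hp⟩ := this
    exact ⟨p, hS.eq_neighborSet hκ hp⟩
  by_contra hnot
  obtain ⟨x, y, hxy⟩ := hS.exists_not_reachable hκ
  have hband (i : Fin (m + 3)) :
      (G.tensorProd (⊤ : SimpleGraph (Fin 2))).vConn ≤ (S ∩ Prod.snd ⁻¹' {i, i + 1}).ncard := by
    have hmeets (K : ((G.tensorProd (cycleGraph (m + 3))).induce Sᶜ).ConnectedComponent) :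
        ∃ q ∈ K.supp, q.1 ∈ Prod.snd ⁻¹' {i, i + 1} := by
      by_contra! hK
      exact hnot (exists_neighborSet_subset_of_supp_avoids hB hS2 K i hK)
    obtain ⟨c, hc, hci⟩ := hmeets (connectedComponentMk _ x)
    obtain ⟨d, hd, hdi⟩ := hmeets (connectedComponentMk _ y)
    refine vConn_doubleCover_le_ncard_inter (cycleGraph_adj_add_one i) hci hdi fun hcd => hxy ?_
    exact (ConnectedComponent.exact hc).symm.trans (hcd.trans (ConnectedComponent.exact hd))
  have hsum := Finset.sum_le_sum fun i (_ : i ∈ Finset.univ) => hband i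
  rw [sum_ncard_inter_preimage_pair S one_ne_zero, Finset.sum_const, Finset.card_univ,
    Fintype.card_fin, smul_eq_mul] at hsum
  omega

/-- For a connected non-bipartite graph G and even n ≥ 6, if
κ(G × K₂) > (4/n)·δ(G), then G × Cₙ is super connected. -/
theorem stmt_13 (G : SimpleGraph α) (hGc : G.Connected) (hGb : ¬ G.Colorable 2)
    (n : ℕ) (hn : 6 ≤ n) (heven : Even n)
    (hk : 4 * G.minDeg < n * (G.tensorProd (⊤ : SimpleGraph (Fin 2))).vConn) :
    (G.tensorProd (cycleGraph n)).SuperConnected :=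
  stmt_13_general G n hn hk
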